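/- Every Sasaki space is a Dacey space: if (X,⊥) is an orthoset such that every orthoclosed subset admits a Sasaki map, then the ortholattice C(X,⊥) of orthoclosed subsets is orthomodular. -/

import Mathlib

/-!
Let `A ⊆ B` be orthoclosed and `φ` a Sasaki map to `A^⊥`; its domain is `∁(A^⊥⊥) = ∁A`.
For `f ∈ A^⊥` the Sasaki condition reads `φ e ⊥ f ↔ e ⊥ f`. Hence `φ` maps `B \ A` into
`B ∩ A^⊥` (test against `B^⊥ ⊆ A^⊥`), and an element `y` orthogonal to `A ∪ (B ∩ A^⊥)` lies in
`A^⊥` and is orthogonal to `φ b`, hence to `b`, for every `b ∈ B \ A`. So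
`(A ∪ (B ∩ A^⊥))^⊥ = B^⊥`, which is the orthomodular law.
-/

/-- The set of elements orthogonal to every element of `A`. -/
def perpSet {X : Type*} (perp : X → X → Prop) (A : Set X) : Set X :=
  {x | ∀ a ∈ A, perp x a}

/-- A subset is orthoclosed if it equals its double orthocomplement. -/
def Orthoclosed {X : Type*} (perp : X → X → Prop) (A : Set X) : Prop :=
  perpSet perp (perpSet perp A) = A

/-- `φ` (restricted to `∁(A^⊥)`) is a Sasaki map to the orthoclosed set `A`. -/
def IsSasakiMap {X : Type*} (perp : X → X → Prop) (A : Set X) (φ : X → X) : Prop :=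
  (∀ e ∈ (perpSet perp A)ᶜ, φ e ∈ A) ∧
  (∀ e ∈ A, φ e = e) ∧
  (∀ e ∈ (perpSet perp A)ᶜ, ∀ f ∈ (perpSet perp A)ᶜ, (perp (φ e) f ↔ perp e (φ f)))

/-- A Sasaki space: every orthoclosed subset admits a Sasaki map. -/
def IsSasakiSpace {X : Type*} (perp : X → X → Prop) : Prop :=
  ∀ A : Set X, Orthoclosed perp A → ∃ φ : X → X, IsSasakiMap perp A φ

section Orthoset

variable {X : Type*} {perp : X → X → Prop}

lemma perpSet_anti {A B : Set X} (h : A ⊆ B) : perpSet perp B ⊆ perpSet perp A :=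
  fun _ hx a ha => hx a (h ha)

lemma subset_perpSet_perpSet (hsymm : ∀ x y, perp x y → perp y x) (A : Set X) :
    A ⊆ perpSet perp (perpSet perp A) :=
  fun a ha _ hy => hsymm _ _ (hy a ha)

lemma orthoclosed_perpSet (hsymm : ∀ x y, perp x y → perp y x) (A : Set X) :
    Orthoclosed perp (perpSet perp A) :=
  (perpSet_anti (subset_perpSet_perpSet hsymm A)).antisymm (subset_perpSet_perpSet hsymm _)

lemma IsSasakiMap.perp_apply_iff (hirrefl : ∀ x, ¬ perp x x) {C : Set X} {φ : X → X}
    (hφ : IsSasakiMap perp C φ) {e f : X} (he : e ∉ perpSet perp C) (hf : f ∈ C) :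
    perp (φ e) f ↔ perp e f := by
  have hf' : f ∉ perpSet perp C := fun h => hirrefl f (h f hf)
  simpa only [hφ.2.1 f hf] using hφ.2.2 e he f hf'

lemma IsSasakiMap.mem_of_perpSet_subset (hsymm : ∀ x y, perp x y → perp y x)
    (hirrefl : ∀ x, ¬ perp x x)
    {C B : Set X} {φ : X → X} (hφ : IsSasakiMap perp C φ) (hB : Orthoclosed perp B)
    (hBC : perpSet perp B ⊆ C) {b : X} (hb : b ∈ B) (hbC : b ∉ perpSet perp C) : φ b ∈ B := by
  rw [← hB]
  intro z hz
  exact (hφ.perp_apply_iff hirrefl hbC (hBC hz)).2 (hsymm _ _ (hz b hb))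

lemma perpSet_union_inter_perpSet_subset (hsymm : ∀ x y, perp x y → perp y x)
    (hirrefl : ∀ x, ¬ perp x x)
    {A B : Set X} (hA : Orthoclosed perp A) (hB : Orthoclosed perp B) (hAB : A ⊆ B)
    {φ : X → X} (hφ : IsSasakiMap perp (perpSet perp A) φ) :
    perpSet perp (A ∪ (B ∩ perpSet perp A)) ⊆ perpSet perp B := by
  intro y hy b hb
  have hyA : y ∈ perpSet perp A := fun a ha => hy a (Or.inl ha)
  by_cases hbA : b ∈ A
  · exact hy b (Or.inl hbA)
  have hb' : b ∉ perpSet perp (perpSet perp A) := by rwa [hA]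
  have hφb : φ b ∈ B ∩ perpSet perp A :=
    ⟨hφ.mem_of_perpSet_subset hsymm hirrefl hB (perpSet_anti hAB) hb hb', hφ.1 b hb'⟩
  exact hsymm _ _ ((hφ.perp_apply_iff hirrefl hb' hyA).1 (hsymm _ _ (hy _ (Or.inr hφb))))

end Orthoset

/-- every Sasaki space is a Dacey space, i.e. the ortholattice of
orthoclosed subsets is orthomodular: for orthoclosed `A ⊆ B`,
`B = A ∨ (B ∧ A^⊥)` (the join being the double orthocomplement of the union). -/
theorem sasakiSpace_is_daceySpace {X : Type*} (perp : X → X → Prop)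
    (hsymm : ∀ x y, perp x y → perp y x) (hirrefl : ∀ x, ¬ perp x x)
    (hSasaki : IsSasakiSpace perp) :
    ∀ A B : Set X, Orthoclosed perp A → Orthoclosed perp B → A ⊆ B →
      B = perpSet perp (perpSet perp (A ∪ (B ∩ perpSet perp A))) := by
  intro A B hA hB hAB
  obtain ⟨φ, hφ⟩ := hSasaki _ (orthoclosed_perpSet hsymm A)
  have hperp := perpSet_union_inter_perpSet_subset hsymm hirrefl hA hB hAB hφ
  apply Set.Subset.antisymm
  · exact (subset_perpSet_perpSet hsymm B).trans (perpSet_anti hperp)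
  · calc perpSet perp (perpSet perp (A ∪ (B ∩ perpSet perp A)))
        ⊆ perpSet perp (perpSet perp B) :=
          perpSet_anti (perpSet_anti (Set.union_subset hAB Set.inter_subset_left))
      _ = B := hB
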